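/- arXiv:1501.05929 — 5 statements merged into one kernel-verified Lean document; each statement's English description precedes it below -/
import Mathlib

section
/- For 1 ≤ p ≤ q < ∞ there exists a constant c(p,q) > 0 such that for every symmetric probability measure φ on a countable group G and every v > 0, one has c(p,q)·Λ_{p,φ}(v)^{q/p} ≤ Λ_{q,φ}(v) (a generalized Cheeger inequality between L^p and L^q isoperimetric profiles). -/
open scoped BigOperators

/-- A symmetric probability measure on a group. -/
def IsSymProb {G : Type*} [Group G] (φ : G → ℝ) : Prop :=
  (∀ x, 0 ≤ φ x) ∧ (∑' x, φ x) = 1 ∧ ∀ x, φ x⁻¹ = φ x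

/-- The `L^p` isoperimetric profile. -/
noncomputable def lambdaP {G : Type*} [Group G] (p : ℝ) (φ : G → ℝ) (v : ℝ) : ℝ :=
  sInf {E : ℝ | ∃ f : G → ℝ, (Function.support f).Finite ∧
    ((Function.support f).ncard : ℝ) ≤ v ∧ (∑' x, |f x| ^ p) = 1 ∧
    E = (1 / 2) * ∑' x : G, ∑' y : G, |f (x * y) - f x| ^ p * φ y}

/-!
If `‖f‖_q = 1`, then `g = |f|^{q/p}` has the same support and `‖g‖_p = 1`. With `s = q/p`, the
mean value bound `||a|^s - |b|^s| ≤ s |a - b| (|a| + |b|)^{s-1}` gives, pointwise on pairs `(x, y)`,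
`|g(xy) - g(x)|^p ≤ s^p |f(xy) - f(x)|^p (|f(xy)| + |f(x)|)^{q-p}`. Hölder's inequality with
exponents `q/p` and `q/(q-p)` for the weight `φ(y)` on `G × G` bounds the sum of the right-hand side
by `(2 E_q(f))^{p/q}` times a power of `∑ (|f(xy)| + |f(x)|)^q φ(y) ≤ 2^{q+1}`, the last bound
because `(x, y) ↦ (xy, y)` is a bijection of `G × G`. Hence `E_p(g) ≤ C E_q(f)^{p/q}`, and taking
infima gives `Λ_p^{q/p} ≤ C^{q/p} Λ_q`.
-/

open Real

lemma summable_of_tsum_ne_zero {ι : Type*} {f : ι → ℝ} (h : ∑' i, f i ≠ 0) : Summable f := by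
  by_contra hf
  exact h (tsum_eq_zero_of_not_summable hf)

lemma add_rpow_le_two_rpow_mul_add_rpow {a b r : ℝ} (ha : 0 ≤ a) (hb : 0 ≤ b) (hr : 0 ≤ r) :
    (a + b) ^ r ≤ 2 ^ r * (a ^ r + b ^ r) := by
  have hmax : max a b ^ r ≤ a ^ r + b ^ r := by
    rcases le_total a b with h | h
    · rw [max_eq_right h]; linarith [rpow_nonneg ha r]
    · rw [max_eq_left h]; linarith [rpow_nonneg hb r]
  calc (a + b) ^ r ≤ (2 * max a b) ^ r :=
        rpow_le_rpow (add_nonneg ha hb) (by linarith [le_max_left a b, le_max_right a b]) hr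
    _ = 2 ^ r * max a b ^ r := mul_rpow zero_le_two (le_max_of_le_left ha)
    _ ≤ 2 ^ r * (a ^ r + b ^ r) := by gcongr

lemma rpow_sub_rpow_le_mul_rpow_sub_one {A B s : ℝ} (hB : 0 ≤ B) (hBA : B ≤ A) (hs : 1 ≤ s) :
    A ^ s - B ^ s ≤ s * (A - B) * A ^ (s - 1) := by
  rcases (hB.trans hBA).eq_or_lt with hA | hA
  · obtain rfl : B = 0 := by linarith
    simp [← hA, zero_rpow (by linarith : s ≠ 0)]
  -- Bernoulli's inequality at `B / A - 1`.
  have hbern := one_add_mul_self_le_rpow_one_add (s := B / A - 1)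
    (by linarith [div_nonneg hB hA.le]) hs
  rw [add_sub_cancel, div_rpow hB hA.le, le_div_iff₀ (rpow_pos_of_pos hA s)] at hbern
  have hAs : A ^ s = A ^ (s - 1) * A := by rw [rpow_sub_one hA.ne']; field_simp
  have hexpand : (1 + s * (B / A - 1)) * (A ^ (s - 1) * A) =
      A ^ (s - 1) * A + s * (B - A) * A ^ (s - 1) := by
    field_simp
  rw [hAs, hexpand] at hbern
  rw [hAs]
  linarith

lemma abs_abs_rpow_sub_abs_rpow_le {s : ℝ} (hs : 1 ≤ s) (a b : ℝ) :
    |(|a| ^ s - |b| ^ s)| ≤ s * |a - b| * (|a| + |b|) ^ (s - 1) := by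
  wlog h : |b| ≤ |a| generalizing a b
  · simpa [abs_sub_comm, add_comm] using this b a (le_of_not_ge h)
  rw [abs_of_nonneg (sub_nonneg.2 (rpow_le_rpow (abs_nonneg b) h (by linarith)))]
  calc |a| ^ s - |b| ^ s ≤ s * (|a| - |b|) * |a| ^ (s - 1) :=
        rpow_sub_rpow_le_mul_rpow_sub_one (abs_nonneg b) h hs
    _ ≤ s * |a - b| * (|a| + |b|) ^ (s - 1) := by
        gcongr
        · exact abs_sub_abs_le_abs_sub a b
        · exact le_add_of_nonneg_right (abs_nonneg b)

lemma abs_abs_rpow_div_sub_abs_rpow_div_rpow_le {p q : ℝ} (hp : 0 < p) (hpq : p ≤ q) (a b : ℝ) :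
    |(|a| ^ (q / p) - |b| ^ (q / p))| ^ p ≤
      (q / p) ^ p * ((|a - b| ^ q) ^ (p / q) * ((|a| + |b|) ^ q) ^ (1 - p / q)) := by
  have hq : 0 < q := hp.trans_le hpq
  calc |(|a| ^ (q / p) - |b| ^ (q / p))| ^ p
      ≤ (q / p * |a - b| * (|a| + |b|) ^ (q / p - 1)) ^ p :=
        rpow_le_rpow (abs_nonneg _)
          (abs_abs_rpow_sub_abs_rpow_le ((one_le_div hp).2 hpq) a b) hp.le
    _ = _ := by
        rw [mul_rpow (by positivity) (by positivity), mul_rpow (by positivity) (by positivity),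
          ← rpow_mul (by positivity), ← rpow_mul (by positivity), ← rpow_mul (by positivity),
          mul_assoc]
        congr 3 <;> field_simp

theorem summable_and_tsum_rpow_mul_rpow_mul_le {ι : Type*} {θ : ℝ} (hθ0 : 0 < θ) (hθ1 : θ < 1)
    {A B μ : ι → ℝ} (hA0 : ∀ i, 0 ≤ A i) (hB0 : ∀ i, 0 ≤ B i) (hμ0 : ∀ i, 0 ≤ μ i)
    (hA : Summable fun i => A i * μ i) (hB : Summable fun i => B i * μ i) :
    Summable (fun i => A i ^ θ * B i ^ (1 - θ) * μ i) ∧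
      ∑' i, A i ^ θ * B i ^ (1 - θ) * μ i ≤
        (∑' i, A i * μ i) ^ θ * (∑' i, B i * μ i) ^ (1 - θ) := by
  -- Hölder with exponents `θ⁻¹, (1 - θ)⁻¹` applied to `(A μ) ^ θ` and `(B μ) ^ (1 - θ)`.
  have hsplit : ∀ i, A i ^ θ * B i ^ (1 - θ) * μ i = (A i * μ i) ^ θ * (B i * μ i) ^ (1 - θ) := by
    intro i
    rw [mul_rpow (hA0 i) (hμ0 i), mul_rpow (hB0 i) (hμ0 i)]
    calc A i ^ θ * B i ^ (1 - θ) * μ i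
        = A i ^ θ * B i ^ (1 - θ) * μ i ^ (θ + (1 - θ)) := by rw [add_sub_cancel, rpow_one]
      _ = _ := by rw [rpow_add' (hμ0 i) (by norm_num)]; ring
  have hAθ : ∀ i, ((A i * μ i) ^ θ) ^ θ⁻¹ = A i * μ i := fun i =>
    rpow_rpow_inv (mul_nonneg (hA0 i) (hμ0 i)) hθ0.ne'
  have hBθ : ∀ i, ((B i * μ i) ^ (1 - θ)) ^ (1 - θ)⁻¹ = B i * μ i := fun i =>
    rpow_rpow_inv (mul_nonneg (hB0 i) (hμ0 i)) (sub_pos.2 hθ1).ne'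
  have h := summable_and_inner_le_Lp_mul_Lq_tsum_of_nonneg
    (HolderConjugate.inv_one_sub_inv hθ0 hθ1)
    (fun i => rpow_nonneg (mul_nonneg (hA0 i) (hμ0 i)) θ)
    (fun i => rpow_nonneg (mul_nonneg (hB0 i) (hμ0 i)) (1 - θ))
    (by simpa only [hAθ] using hA) (by simpa only [hBθ] using hB)
  simp only [hAθ, hBθ, one_div, inv_inv] at h
  simpa only [hsplit] using h

def IsAdmissible {α : Type*} (p v : ℝ) (f : α → ℝ) : Prop :=
  (Function.support f).Finite ∧ ((Function.support f).ncard : ℝ) ≤ v ∧ ∑' x, |f x| ^ p = 1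

lemma IsAdmissible.abs_rpow {α : Type*} {f : α → ℝ} {p q t v : ℝ} (hf : IsAdmissible q v f)
    (ht : 0 < t) (hpt : p * t = q) :
    IsAdmissible p v (fun x => |f x| ^ t) := by
  have hsupp : Function.support (fun x => |f x| ^ t) = Function.support f := by
    ext x
    simp [rpow_eq_zero (abs_nonneg _) ht.ne']
  refine ⟨hsupp ▸ hf.1, hsupp ▸ hf.2.1, ?_⟩
  simp_rw [abs_of_nonneg (rpow_nonneg (abs_nonneg _) t), ← rpow_mul (abs_nonneg _), mul_comm t,
    hpt]
  exact hf.2.2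

section Group

variable {G : Type*} [Group G] {φ f : G → ℝ} {p q r v : ℝ}

lemma hasSum_comp_mul_mul {F : G → ℝ} (hF0 : ∀ x, 0 ≤ F x) (hφ0 : ∀ y, 0 ≤ φ y)
    (hF : Summable F) (hφ : Summable φ) :
    HasSum (fun z : G × G => F (z.1 * z.2) * φ z.2) ((∑' x, F x) * ∑' y, φ y) := by
  let shear : G × G ≃ G × G :=
    { toFun := fun z => (z.1 * z.2, z.2)
      invFun := fun z => (z.1 * z.2⁻¹, z.2)
      left_inv := fun z => by simp
      right_inv := fun z => by simp }
  have hprod : Summable fun z : G × G => F z.1 * φ z.2 := hF.mul_of_nonneg hφ hF0 hφ0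
  have h := (shear.hasSum_iff (f := fun z => F z.1 * φ z.2)).mpr hprod.hasSum
  rw [hF.tsum_mul_tsum hφ hprod]
  exact h

lemma summable_and_tsum_abs_add_abs_rpow_mul_le (hr : 0 ≤ r) (hφ0 : ∀ y, 0 ≤ φ y)
    (hφ : Summable φ) (hf : Summable fun x => |f x| ^ r) :
    Summable (fun z : G × G => (|f (z.1 * z.2)| + |f z.1|) ^ r * φ z.2) ∧
      ∑' z : G × G, (|f (z.1 * z.2)| + |f z.1|) ^ r * φ z.2 ≤
        2 ^ (r + 1) * (∑' x, |f x| ^ r) * ∑' y, φ y := by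
  have hF0 : ∀ x, 0 ≤ |f x| ^ r := fun x => rpow_nonneg (abs_nonneg _) r
  have hprod := hf.mul_of_nonneg hφ hF0 hφ0
  have hprod_sum := hprod.hasSum
  rw [← hf.tsum_mul_tsum hφ hprod] at hprod_sum
  have hbound := ((hasSum_comp_mul_mul hF0 hφ0 hf hφ).add hprod_sum).mul_left (2 ^ r)
  have hpt : ∀ z : G × G, (|f (z.1 * z.2)| + |f z.1|) ^ r * φ z.2 ≤
      2 ^ r * (|f (z.1 * z.2)| ^ r * φ z.2 + |f z.1| ^ r * φ z.2) := fun z => by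
    rw [← add_mul, ← mul_assoc]
    exact mul_le_mul_of_nonneg_right
      (add_rpow_le_two_rpow_mul_add_rpow (abs_nonneg _) (abs_nonneg _) hr) (hφ0 _)
  have hsum : Summable (fun z : G × G => (|f (z.1 * z.2)| + |f z.1|) ^ r * φ z.2) :=
    hbound.summable.of_nonneg_of_le (fun z => by have := hφ0 z.2; positivity) hpt
  refine ⟨hsum, (hasSum_le hpt hsum.hasSum hbound).trans_eq ?_⟩
  rw [rpow_add two_pos, rpow_one]
  ring

lemma summable_abs_sub_rpow_mul (hr : 0 ≤ r) (hφ0 : ∀ y, 0 ≤ φ y) (hφ : Summable φ)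
    (hf : Summable fun x => |f x| ^ r) :
    Summable (fun z : G × G => |f (z.1 * z.2) - f z.1| ^ r * φ z.2) :=
  (summable_and_tsum_abs_add_abs_rpow_mul_le hr hφ0 hφ hf).1.of_nonneg_of_le
    (fun z => by have := hφ0 z.2; positivity)
    fun z => mul_le_mul_of_nonneg_right (rpow_le_rpow (abs_nonneg _) (abs_sub _ _) hr) (hφ0 _)

/-- The energy `E_{p,φ}(f)` of the paper. -/
noncomputable def energy (p : ℝ) (φ f : G → ℝ) : ℝ :=
  (1 / 2) * ∑' x : G, ∑' y : G, |f (x * y) - f x| ^ p * φ y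

lemma energy_nonneg (hφ0 : ∀ y, 0 ≤ φ y) : 0 ≤ energy p φ f :=
  mul_nonneg (by norm_num) (tsum_nonneg fun _ => tsum_nonneg fun y =>
    mul_nonneg (rpow_nonneg (abs_nonneg _) p) (hφ0 y))

lemma energy_eq_tsum_prod (h : Summable fun z : G × G => |f (z.1 * z.2) - f z.1| ^ p * φ z.2) :
    energy p φ f = (1 / 2) * ∑' z : G × G, |f (z.1 * z.2) - f z.1| ^ p * φ z.2 := by
  rw [energy, h.tsum_prod]

lemma lambdaP_nonneg (hφ0 : ∀ y, 0 ≤ φ y) : 0 ≤ lambdaP p φ v :=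
  Real.sInf_nonneg (by rintro _ ⟨f, -, -, -, rfl⟩; exact energy_nonneg hφ0)

lemma lambdaP_le_energy (hφ0 : ∀ y, 0 ≤ φ y) (hf : IsAdmissible p v f) :
    lambdaP p φ v ≤ energy p φ f :=
  csInf_le ⟨0, by rintro _ ⟨g, -, -, -, rfl⟩; exact energy_nonneg hφ0⟩
    ⟨f, hf.1, hf.2.1, hf.2.2, rfl⟩

lemma le_lambdaP {a : ℝ} (hne : ∃ f : G → ℝ, IsAdmissible p v f)
    (h : ∀ f, IsAdmissible p v f → a ≤ energy p φ f) : a ≤ lambdaP p φ v := by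
  obtain ⟨f, hf⟩ := hne
  refine le_csInf ⟨_, f, hf.1, hf.2.1, hf.2.2, rfl⟩ ?_
  rintro _ ⟨g, hg₁, hg₂, hg₃, rfl⟩
  exact h g ⟨hg₁, hg₂, hg₃⟩

lemma lambdaP_eq_zero (h : ∀ f : G → ℝ, ¬IsAdmissible p v f) : lambdaP p φ v = 0 := by
  refine (congrArg sInf (Set.eq_empty_of_forall_notMem ?_)).trans Real.sInf_empty
  rintro _ ⟨f, hf₁, hf₂, hf₃, -⟩
  exact h f ⟨hf₁, hf₂, hf₃⟩

lemma rpow_lambdaP_le_mul_lambdaP {K : ℝ} (hp : 0 < p) (hq : 0 < q) (hK : 0 < K)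
    (hφ0 : ∀ y, 0 ≤ φ y)
    (h : ∀ f, IsAdmissible q v f → ∃ g, IsAdmissible p v g ∧
      energy p φ g ≤ K * energy q φ f ^ (p / q)) :
    lambdaP p φ v ^ (q / p) ≤ K ^ (q / p) * lambdaP q φ v := by
  by_cases hne : ∃ f : G → ℝ, IsAdmissible q v f
  · rw [← div_le_iff₀' (by positivity)]
    refine le_lambdaP hne fun f hf => ?_
    obtain ⟨g, hg, hgf⟩ := h f hf
    have hE := energy_nonneg (p := q) (f := f) hφ0
    rw [div_le_iff₀' (by positivity)]
    calc lambdaP p φ v ^ (q / p) ≤ (K * energy q φ f ^ (p / q)) ^ (q / p) :=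
          rpow_le_rpow (lambdaP_nonneg hφ0) ((lambdaP_le_energy hφ0 hg).trans hgf) (by positivity)
      _ = K ^ (q / p) * energy q φ f := by
          rw [mul_rpow hK.le (by positivity), ← rpow_mul hE,
            div_mul_div_comm, mul_comm p q, div_self (by positivity), rpow_one]
  · simp only [not_exists] at hne
    have hne' : ∀ g : G → ℝ, ¬IsAdmissible p v g := fun g hg =>
      hne _ (hg.abs_rpow (div_pos hp hq) (mul_div_cancel₀ p hq.ne'))
    rw [lambdaP_eq_zero hne, lambdaP_eq_zero hne', zero_rpow (div_pos hq hp).ne', mul_zero]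

theorem summable_and_tsum_mixed_le_energy_rpow (hp : 0 < p) (hpq : p < q)
    (hφ0 : ∀ y, 0 ≤ φ y) (hφ1 : ∑' y, φ y = 1) (hf : ∑' x, |f x| ^ q = 1) :
    Summable (fun z : G × G => (|f (z.1 * z.2) - f z.1| ^ q) ^ (p / q) *
        ((|f (z.1 * z.2)| + |f z.1|) ^ q) ^ (1 - p / q) * φ z.2) ∧
      ∑' z : G × G, (|f (z.1 * z.2) - f z.1| ^ q) ^ (p / q) *
          ((|f (z.1 * z.2)| + |f z.1|) ^ q) ^ (1 - p / q) * φ z.2 ≤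
        2 ^ (q + 2) * energy q φ f ^ (p / q) := by
  have hq : 0 < q := hp.trans hpq
  have hθ1 : p / q < 1 := (div_lt_one hq).2 hpq
  have hφ : Summable φ := summable_of_tsum_ne_zero (hφ1 ▸ one_ne_zero)
  have hfq : Summable fun x => |f x| ^ q := summable_of_tsum_ne_zero (hf ▸ one_ne_zero)
  have hD := summable_abs_sub_rpow_mul hq.le hφ0 hφ hfq
  obtain ⟨hS, hS_le⟩ := summable_and_tsum_abs_add_abs_rpow_mul_le hq.le hφ0 hφ hfq
  rw [hf, hφ1, mul_one, mul_one] at hS_le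
  obtain ⟨hDS, hDS_le⟩ := summable_and_tsum_rpow_mul_rpow_mul_le (div_pos hp hq) hθ1
    (A := fun z : G × G => |f (z.1 * z.2) - f z.1| ^ q)
    (B := fun z : G × G => (|f (z.1 * z.2)| + |f z.1|) ^ q) (μ := fun z => φ z.2)
    (fun _ => by positivity) (fun _ => by positivity) (fun z => hφ0 z.2) hD hS
  refine ⟨hDS, hDS_le.trans ?_⟩
  have hE := energy_nonneg (p := q) (f := f) hφ0
  have h2θ : (2 : ℝ) ^ (p / q) ≤ 2 := by
    simpa using rpow_le_rpow_of_exponent_le one_le_two hθ1.le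
  have h2q : ((2 : ℝ) ^ (q + 1)) ^ (1 - p / q) ≤ 2 ^ (q + 1) := by
    simpa using rpow_le_rpow_of_exponent_le (one_le_rpow one_le_two (by linarith))
      (by linarith [div_pos hp hq] : 1 - p / q ≤ 1)
  calc (∑' z : G × G, |f (z.1 * z.2) - f z.1| ^ q * φ z.2) ^ (p / q) *
        (∑' z : G × G, (|f (z.1 * z.2)| + |f z.1|) ^ q * φ z.2) ^ (1 - p / q)
      ≤ (2 * energy q φ f) ^ (p / q) * (2 ^ (q + 1)) ^ (1 - p / q) := by
        rw [energy_eq_tsum_prod hD, ← mul_assoc, mul_one_div_cancel two_ne_zero, one_mul]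
        exact mul_le_mul_of_nonneg_left (rpow_le_rpow
          (tsum_nonneg fun z => by have := hφ0 z.2; positivity) hS_le (by linarith))
          (rpow_nonneg (tsum_nonneg fun z => by have := hφ0 z.2; positivity) _)
    _ = energy q φ f ^ (p / q) * (2 ^ (p / q) * (2 ^ (q + 1)) ^ (1 - p / q)) := by
        rw [mul_rpow zero_le_two hE]; ring
    _ ≤ energy q φ f ^ (p / q) * (2 * 2 ^ (q + 1)) := by gcongr
    _ = 2 ^ (q + 2) * energy q φ f ^ (p / q) := by
        rw [rpow_add two_pos, rpow_add two_pos, rpow_one, rpow_two]; ring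

theorem energy_abs_rpow_div_le (hp : 0 < p) (hpq : p < q) (hφ0 : ∀ y, 0 ≤ φ y)
    (hφ1 : ∑' y, φ y = 1) (hf : ∑' x, |f x| ^ q = 1) :
    energy p φ (fun x => |f x| ^ (q / p)) ≤
      (q / p) ^ p * 2 ^ (q + 1) * energy q φ f ^ (p / q) := by
  obtain ⟨hmixed, hmixed_le⟩ := summable_and_tsum_mixed_le_energy_rpow hp hpq hφ0 hφ1 hf
  have hpt : ∀ z : G × G, |(|f (z.1 * z.2)| ^ (q / p) - |f z.1| ^ (q / p))| ^ p * φ z.2 ≤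
      (q / p) ^ p * ((|f (z.1 * z.2) - f z.1| ^ q) ^ (p / q) *
        ((|f (z.1 * z.2)| + |f z.1|) ^ q) ^ (1 - p / q) * φ z.2) := fun z => by
    rw [← mul_assoc]
    exact mul_le_mul_of_nonneg_right
      (abs_abs_rpow_div_sub_abs_rpow_div_rpow_le hp hpq.le _ _) (hφ0 _)
  have hg := (hmixed.mul_left ((q / p) ^ p)).of_nonneg_of_le
    (fun z => by have := hφ0 z.2; positivity) hpt
  rw [energy_eq_tsum_prod (f := fun x => |f x| ^ (q / p)) hg]
  calc 1 / 2 * ∑' z : G × G, |(|f (z.1 * z.2)| ^ (q / p) - |f z.1| ^ (q / p))| ^ p * φ z.2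
      ≤ 1 / 2 * ((q / p) ^ p * (2 ^ (q + 2) * energy q φ f ^ (p / q))) := by
        refine mul_le_mul_of_nonneg_left
          ((hg.tsum_le_tsum hpt (hmixed.mul_left _)).trans ?_) one_half_pos.le
        rw [tsum_mul_left]
        exact mul_le_mul_of_nonneg_left hmixed_le (rpow_nonneg (div_pos (hp.trans hpq) hp).le _)
    _ = (q / p) ^ p * 2 ^ (q + 1) * energy q φ f ^ (p / q) := by
        rw [rpow_add two_pos, rpow_add two_pos, rpow_one, rpow_two]; ring

end Group

/-- Generalized Cheeger inequality: for `1 ≤ p ≤ q < ∞` there is `c(p,q) > 0` such that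
for every symmetric probability measure `φ` on a countable group `G` and every `v > 0`,
`c(p,q)·Λ_{p,φ}(v)^{q/p} ≤ Λ_{q,φ}(v)`. -/
theorem cheeger_pq (p q : ℝ) (hp : 1 ≤ p) (hpq : p ≤ q) :
    ∃ c > (0 : ℝ), ∀ (G : Type) [Group G] [Countable G] (φ : G → ℝ), IsSymProb φ →
      ∀ v > (0 : ℝ), c * lambdaP p φ v ^ (q / p) ≤ lambdaP q φ v := by
  have hp0 : 0 < p := one_pos.trans_le hp
  rcases hpq.eq_or_lt with rfl | hlt
  · exact ⟨1, one_pos, fun G _ _ φ _ v _ => by rw [div_self hp0.ne', rpow_one, one_mul]⟩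
  have hq0 : 0 < q := hp0.trans hlt
  set K := (q / p) ^ p * 2 ^ (q + 1)
  have hK : 0 < K := by positivity
  refine ⟨(K ^ (q / p))⁻¹, by positivity, fun G _ _ φ hφ v _ => ?_⟩
  rw [inv_mul_le_iff₀ (by positivity)]
  exact rpow_lambdaP_le_mul_lambdaP hp0 hq0 hK hφ.1 fun f hf =>
    ⟨_, hf.abs_rpow (div_pos hq0 hp0) (mul_div_cancel₀ q hp0.ne'),
      energy_abs_rpow_div_le hp0 hlt hφ.1 hφ.2.1 hf.2.2⟩
end

section
/- For 1 ≤ p ≤ q < ∞ the isoperimetric profiles satisfy Λ_{q,φ}(v) ≤ 2(1+p)·4^p·Λ_{p,φ}(v) for every symmetric probability measure φ on a countable group G and every v > 0. -/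
open scoped BigOperators

private lemma rpow_add_le_aux {x y θ : ℝ} (hx : 0 ≤ x) (hy : 0 ≤ y) (h0 : 0 ≤ θ) (h1 : θ ≤ 1) :
    (x + y) ^ θ ≤ x ^ θ + y ^ θ := by
  have h := NNReal.rpow_add_le_add_rpow x.toNNReal y.toNNReal h0 h1
  have h2 := NNReal.coe_le_coe.mpr h
  rw [NNReal.coe_add, NNReal.coe_rpow, NNReal.coe_rpow, NNReal.coe_rpow, ← Real.toNNReal_add hx hy,
    Real.coe_toNNReal _ (by positivity), Real.coe_toNNReal x hx, Real.coe_toNNReal y hy] at h2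
  exact h2

private lemma abs_rpow_sub_abs_rpow {θ : ℝ} (h0 : 0 < θ) (h1 : θ ≤ 1) (a b : ℝ) :
    |(|a| ^ θ - |b| ^ θ)| ≤ |a - b| ^ θ := by
  wlog hab : |b| ≤ |a| with H
  · rw [abs_sub_comm, abs_sub_comm a b]; exact H h0 h1 b a (le_of_not_ge hab)
  rw [abs_of_nonneg (sub_nonneg.2 (Real.rpow_le_rpow (abs_nonneg b) hab h0.le))]
  have key : |a| ^ θ ≤ (|a| - |b|) ^ θ + |b| ^ θ := by
    have h := rpow_add_le_aux (sub_nonneg.2 hab) (abs_nonneg b) h0.le h1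
    rwa [sub_add_cancel] at h
  have h2 : (|a| - |b|) ^ θ ≤ |a - b| ^ θ :=
    Real.rpow_le_rpow (sub_nonneg.2 hab) (abs_sub_abs_le_abs_sub a b) h0.le
  linarith

private lemma abs_sub_rpow_le {r : ℝ} (hr : 0 ≤ r) (a b : ℝ) :
    |a - b| ^ r ≤ 2 ^ r * (|a| ^ r + |b| ^ r) := by
  have h1 : |a - b| ≤ 2 * max |a| |b| := by
    calc |a - b| ≤ |a| + |b| := abs_sub a b
    _ ≤ 2 * max |a| |b| := by
      rcases le_total |a| |b| with h | h <;> simp [max_eq_right, max_eq_left, h] <;> linarith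
  calc |a - b| ^ r ≤ (2 * max |a| |b|) ^ r :=
        Real.rpow_le_rpow (abs_nonneg _) h1 hr
    _ = 2 ^ r * (max |a| |b|) ^ r := Real.mul_rpow (by norm_num) (le_max_iff.2 (Or.inl (abs_nonneg _)))
    _ ≤ 2 ^ r * (|a| ^ r + |b| ^ r) := by
        gcongr
        rcases le_total |a| |b| with h | h
        · rw [max_eq_right h]
          nlinarith [Real.rpow_nonneg (abs_nonneg a) r]
        · rw [max_eq_left h]
          nlinarith [Real.rpow_nonneg (abs_nonneg b) r]

private def shearEquiv (G : Type*) [Group G] : G × G ≃ G × G where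
  toFun z := (z.1 * z.2, z.2)
  invFun z := (z.1 * z.2⁻¹, z.2)
  left_inv z := by simp
  right_inv z := by simp

private lemma summable_rpow_of_finite_support {G : Type*} {r : ℝ} (hr : 0 < r)
    {f : G → ℝ} (hfin : (Function.support f).Finite) :
    Summable (fun x => |f x| ^ r) := by
  apply summable_of_ne_finset_zero (s := hfin.toFinset)
  intro x hx
  have hfx : f x = 0 := by
    by_contra h
    exact hx (hfin.mem_toFinset.2 h)
  simp [hfx, Real.zero_rpow hr.ne']

private lemma energy_summable {G : Type*} [Group G] {r : ℝ} (hr : 0 < r)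
    {φ : G → ℝ} (hφ0 : ∀ x, 0 ≤ φ x) (hφs : Summable φ)
    {f : G → ℝ} (hfin : (Function.support f).Finite) :
    Summable (fun z : G × G => |f (z.1 * z.2) - f z.1| ^ r * φ z.2) := by
  have hf : Summable (fun x => |f x| ^ r) := summable_rpow_of_finite_support hr hfin
  have hT2 : Summable (fun z : G × G => |f z.1| ^ r * φ z.2) :=
    hf.mul_of_nonneg hφs (fun x => Real.rpow_nonneg (abs_nonneg _) r) hφ0
  have hT1 : Summable (fun z : G × G => |f (z.1 * z.2)| ^ r * φ z.2) := by
    have := ((shearEquiv G).summable_iff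
      (f := fun z : G × G => |f z.1| ^ r * φ z.2)).2 hT2
    simpa [shearEquiv, Function.comp_def] using this
  apply Summable.of_nonneg_of_le (fun z => mul_nonneg (Real.rpow_nonneg (abs_nonneg _) _) (hφ0 _))
    (fun z => ?_) ((hT1.add hT2).mul_left (2 ^ r))
  calc |f (z.1*z.2) - f z.1| ^ r * φ z.2
      ≤ (2 ^ r * (|f (z.1*z.2)| ^ r + |f z.1| ^ r)) * φ z.2 :=
        mul_le_mul_of_nonneg_right (abs_sub_rpow_le hr.le _ _) (hφ0 _)
    _ = 2 ^ r * (|f (z.1*z.2)| ^ r * φ z.2 + |f z.1| ^ r * φ z.2) := by ring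

private lemma transfer_support {G : Type*} {r s : ℝ} (hrs : r / s ≠ 0) (f : G → ℝ) :
    Function.support (fun x => |f x| ^ (r / s)) = Function.support f := by
  ext x
  simp only [Function.mem_support, ne_eq, Real.rpow_eq_zero (abs_nonneg _) hrs, abs_eq_zero]

private lemma transfer_norm {G : Type*} {r s : ℝ} (hs : s ≠ 0) (f : G → ℝ) :
    (∑' x, |(|f x| ^ (r / s))| ^ s) = ∑' x, |f x| ^ r := by
  refine tsum_congr fun x => ?_
  rw [abs_of_nonneg (Real.rpow_nonneg (abs_nonneg _) _), ← Real.rpow_mul (abs_nonneg _),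
    div_mul_cancel₀ r hs]

private lemma energy_le {G : Type*} [Group G] {p q : ℝ} (hp0 : 0 < p) (hq0 : 0 < q)
    (hpq : p ≤ q) {φ : G → ℝ} (hφ0 : ∀ x, 0 ≤ φ x) (hφs : Summable φ)
    {f : G → ℝ} (hfin : (Function.support f).Finite) :
    (1/2 : ℝ) * ∑' x : G, ∑' y : G, |(|f (x*y)| ^ (p/q)) - |f x| ^ (p/q)| ^ q * φ y
      ≤ (1/2) * ∑' x : G, ∑' y : G, |f (x*y) - f x| ^ p * φ y := by
  have hθ0 : 0 < p / q := div_pos hp0 hq0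
  have hθ1 : p / q ≤ 1 := div_le_one_of_le₀ hpq hq0.le
  have pt : ∀ z : G × G, |(|f (z.1*z.2)| ^ (p/q)) - |f z.1| ^ (p/q)| ^ q * φ z.2
      ≤ |f (z.1*z.2) - f z.1| ^ p * φ z.2 := by
    intro z
    refine mul_le_mul_of_nonneg_right ?_ (hφ0 _)
    calc |(|f (z.1*z.2)| ^ (p/q)) - |f z.1| ^ (p/q)| ^ q
        ≤ (|f (z.1*z.2) - f z.1| ^ (p/q)) ^ q :=
          Real.rpow_le_rpow (abs_nonneg _) (abs_rpow_sub_abs_rpow hθ0 hθ1 _ _) hq0.le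
      _ = |f (z.1*z.2) - f z.1| ^ p := by
          rw [← Real.rpow_mul (abs_nonneg _), div_mul_cancel₀ p hq0.ne']
  have Hp : Summable (fun z : G × G => |f (z.1 * z.2) - f z.1| ^ p * φ z.2) :=
    energy_summable hp0 hφ0 hφs hfin
  have Hq : Summable (fun z : G × G =>
      |(|f (z.1*z.2)| ^ (p/q)) - |f z.1| ^ (p/q)| ^ q * φ z.2) :=
    Summable.of_nonneg_of_le (fun z => mul_nonneg (Real.rpow_nonneg (abs_nonneg _) _) (hφ0 _)) pt Hp
  have sHp : Summable (fun x : G => ∑' y : G, |f (x * y) - f x| ^ p * φ y) :=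
    (Hp.hasSum.prod_fiberwise fun x => (Hp.prod_factor x).hasSum).summable
  have sHq : Summable (fun x : G => ∑' y : G,
      |(|f (x*y)| ^ (p/q)) - |f x| ^ (p/q)| ^ q * φ y) :=
    (Hq.hasSum.prod_fiberwise fun x => (Hq.prod_factor x).hasSum).summable
  refine mul_le_mul_of_nonneg_left ?_ (by norm_num)
  refine Summable.tsum_le_tsum (fun x => ?_) sHq sHp
  exact Summable.tsum_le_tsum (fun y => pt (x, y)) (Hq.prod_factor x) (Hp.prod_factor x)
/-- For `1 ≤ p ≤ q < ∞`, `Λ_{q,φ}(v) ≤ 2(1+p)·4^p·Λ_{p,φ}(v)` for every symmetric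
probability measure `φ` on a countable group `G` and every `v > 0`. -/
theorem profile_q_le_profile_p {G : Type*} [Group G] [Countable G]
    (p q : ℝ) (hp : 1 ≤ p) (hpq : p ≤ q)
    (φ : G → ℝ) (hφ : IsSymProb φ) (v : ℝ) (hv : 0 < v) :
    lambdaP q φ v ≤ 2 * (1 + p) * 4 ^ p * lambdaP p φ v := by
  obtain ⟨hφ0, hφ1, hφsymm⟩ := hφ
  have hφs : Summable φ := by
    by_contra h
    rw [tsum_eq_zero_of_not_summable h] at hφ1
    norm_num at hφ1
  have hp0 : 0 < p := lt_of_lt_of_le one_pos hp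
  have hq0 : 0 < q := lt_of_lt_of_le hp0 hpq
  set S : ℝ → Set ℝ := fun r => {E : ℝ | ∃ f : G → ℝ, (Function.support f).Finite ∧
    ((Function.support f).ncard : ℝ) ≤ v ∧ (∑' x, |f x| ^ r) = 1 ∧
    E = (1 / 2) * ∑' x : G, ∑' y : G, |f (x * y) - f x| ^ r * φ y} with hSdef
  have hlam : ∀ r, lambdaP r φ v = sInf (S r) := fun r => rfl
  have hnonneg : ∀ r : ℝ, ∀ E ∈ S r, 0 ≤ E := by
    intro r E hE
    obtain ⟨f, -, -, -, rfl⟩ := hE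
    have h : (0:ℝ) ≤ ∑' x : G, ∑' y : G, |f (x * y) - f x| ^ r * φ y :=
      tsum_nonneg fun x => tsum_nonneg fun y =>
        mul_nonneg (Real.rpow_nonneg (abs_nonneg _) _) (hφ0 _)
    linarith
  have hmemtrans : ∀ r s : ℝ, 0 < r → 0 < s → (S r).Nonempty → (S s).Nonempty := by
    rintro r s hr hs ⟨E, f, hfin, hcard, hnorm, hEeq⟩
    refine ⟨_, fun x => |f x| ^ (r/s), ?_, ?_, ?_, rfl⟩
    · rw [transfer_support (div_pos hr hs).ne' f]; exact hfin
    · rw [transfer_support (div_pos hr hs).ne' f]; exact hcard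
    · show (∑' x, |(|f x| ^ (r/s))| ^ s) = 1
      rw [transfer_norm hs.ne' f]; exact hnorm
  have hmain : lambdaP q φ v ≤ lambdaP p φ v := by
    rcases Set.eq_empty_or_nonempty (S p) with hSp | hSp
    · have hSq : S q = ∅ := by
        rw [Set.eq_empty_iff_forall_notMem]
        intro E hE
        have h := hmemtrans q p hq0 hp0 ⟨E, hE⟩
        rw [hSp] at h
        exact Set.not_nonempty_empty h
      rw [hlam p, hlam q, hSp, hSq, Real.sInf_empty]
    · rw [hlam p, hlam q]
      refine le_csInf hSp ?_
      intro E hE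
      obtain ⟨f, hfin, hcard, hnorm, hEeq⟩ := hE
      have hmemq : ((1/2 : ℝ) * ∑' x : G, ∑' y : G,
          |(fun x => |f x| ^ (p/q)) (x * y) - (fun x => |f x| ^ (p/q)) x| ^ q * φ y) ∈ S q := by
        refine ⟨fun x => |f x| ^ (p/q), ?_, ?_, ?_, rfl⟩
        · rw [transfer_support (div_pos hp0 hq0).ne' f]; exact hfin
        · rw [transfer_support (div_pos hp0 hq0).ne' f]; exact hcard
        · show (∑' x, |(|f x| ^ (p/q))| ^ q) = 1
          rw [transfer_norm hq0.ne' f]; exact hnorm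
      have hbdd : BddBelow (S q) := ⟨0, fun E' hE' => hnonneg q E' hE'⟩
      refine le_trans (csInf_le hbdd hmemq) ?_
      rw [hEeq]
      simpa using energy_le hp0 hq0 hpq hφ0 hφs hfin
  have hC : 1 ≤ 2 * (1 + p) * 4 ^ p := by
    have h4 : (4:ℝ) ^ (1:ℝ) ≤ 4 ^ p := Real.rpow_le_rpow_of_exponent_le (by norm_num) hp
    rw [Real.rpow_one] at h4
    nlinarith
  have hl0 : 0 ≤ lambdaP p φ v := by
    rw [hlam p]; exact Real.sInf_nonneg (hnonneg p)
  calc lambdaP q φ v ≤ lambdaP p φ v := hmain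
    _ = 1 * lambdaP p φ v := (one_mul _).symm
    _ ≤ 2 * (1 + p) * 4 ^ p * lambdaP p φ v := mul_le_mul_of_nonneg_right hC hl0
end

section
/- Pseudo-Poincaré inequality: for a finitely generated group G with finite symmetric generating set S* containing the identity and word length |·|, for every y ∈ G, every p ≥ 1, and every finitely supported f: G → ℝ, one has Σ_x |f(xy) − f(x)|^p ≤ |S*|·|y|^p · Σ_{x,z} |f(xz) − f(x)|^p u(z), where u is the uniform probability measure on S*. -/
/-!
Write `y = s₁ ⋯ sₙ` as a word of minimal length `n = |y|` in `S`. For each `x`, the difference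
`f (x y) - f x` telescopes into the `n` increments `f (x s₁ ⋯ sᵢ) - f (x s₁ ⋯ sᵢ₋₁)`, so convexity
of `t ↦ t ^ p` gives `|f (x y) - f x| ^ p ≤ n ^ (p - 1) ∑ᵢ |f (x s₁ ⋯ sᵢ) - f (x s₁ ⋯ sᵢ₋₁)| ^ p`.
Summing over `x`, right translation by `s₁ ⋯ sᵢ₋₁` turns the `i`-th sum into
`∑ₓ |f (x sᵢ) - f x| ^ p ≤ ∑_{s ∈ S} ∑ₓ |f (x s) - f x| ^ p = |S| ∑ₓ ∑_z |f (x z) - f x| ^ p u(z)`.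
-/

open scoped BigOperators

/-- Word length with respect to a finite symmetric generating set `S`. -/
noncomputable def wordLength {G : Type*} [Group G] (S : Finset G) (g : G) : ℕ :=
  sInf {n : ℕ | ∃ l : List G, (∀ x ∈ l, x ∈ S) ∧ l.length = n ∧ l.prod = g}

/-- The uniform probability measure on the finite symmetric generating set `S`. -/
noncomputable def unifS {G : Type*} [Group G] [DecidableEq G] (S : Finset G) : G → ℝ :=
  fun y => if y ∈ S then ((S.card : ℝ))⁻¹ else 0

open Finset

section ShiftEnergy

variable {G : Type*} [Group G] {f : G → ℝ} {p : ℝ}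

noncomputable def shiftEnergy (f : G → ℝ) (p : ℝ) (g : G) : ℝ :=
  ∑' x, |f (x * g) - f x| ^ p

lemma summable_abs_sub_rpow (hf : (Function.support f).Finite) (hp : 0 < p) (g : G) :
    Summable fun x => |f (x * g) - f x| ^ p := by
  refine summable_of_hasFiniteSupport <|
    ((hf.preimage (mul_left_injective g).injOn).union hf).subset fun x hx => ?_
  by_contra h
  simp only [Set.mem_union, Set.mem_preimage, Function.mem_support, not_or, not_not] at h
  simp [h.1, h.2, Real.zero_rpow hp.ne'] at hx

lemma shiftEnergy_nonneg (g : G) : 0 ≤ shiftEnergy f p g :=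
  tsum_nonneg fun _ => Real.rpow_nonneg (abs_nonneg _) p

lemma tsum_abs_sub_rpow_mul_right (a g : G) :
    ∑' x, |f (x * a * g) - f (x * a)| ^ p = shiftEnergy f p g :=
  (Equiv.mulRight a).tsum_eq fun x => |f (x * g) - f x| ^ p

lemma abs_sub_list_prod_le (x : G) (l : List G) :
    |f (x * l.prod) - f x| ≤
      ∑ i : Fin l.length, |f (x * (l.take i).prod * l[i]) - f (x * (l.take i).prod)| := by
  have htelescope :
      ∑ i : Fin l.length, (f (x * (l.take i).prod * l[i]) - f (x * (l.take i).prod)) =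
        f (x * l.prod) - f x := by
    have := sum_range_sub (fun i => f (x * (l.take i).prod)) l.length
    simp only [List.take_length, List.take_zero, List.prod_nil, mul_one] at this
    rw [← this, ← Fin.sum_univ_eq_sum_range]
    exact sum_congr rfl fun i _ => by rw [List.prod_take_succ l i i.isLt, mul_assoc]; rfl
  rw [← htelescope]
  exact abs_sum_le_sum_abs _ _

lemma abs_sub_list_prod_rpow_le (hp : 1 ≤ p) (x : G) (l : List G) :
    |f (x * l.prod) - f x| ^ p ≤ (l.length : ℝ) ^ (p - 1) *
      ∑ i : Fin l.length, |f (x * (l.take i).prod * l[i]) - f (x * (l.take i).prod)| ^ p := by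
  calc |f (x * l.prod) - f x| ^ p
      ≤ (∑ i : Fin l.length, |f (x * (l.take i).prod * l[i]) - f (x * (l.take i).prod)|) ^ p :=
        Real.rpow_le_rpow (abs_nonneg _) (abs_sub_list_prod_le x l) (by linarith)
    _ ≤ _ := by
        simpa using Real.rpow_sum_le_const_mul_sum_rpow univ
          (fun i : Fin l.length => f (x * (l.take i).prod * l[i]) - f (x * (l.take i).prod)) hp

lemma shiftEnergy_list_prod_le (hf : (Function.support f).Finite) (hp : 1 ≤ p) (l : List G) :
    shiftEnergy f p l.prod ≤
      (l.length : ℝ) ^ (p - 1) * ∑ i : Fin l.length, shiftEnergy f p l[i] := by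
  have hp₀ : 0 < p := by linarith
  have hstep : ∀ i : Fin l.length, Summable fun x =>
      |f (x * (l.take i).prod * l[i]) - f (x * (l.take i).prod)| ^ p := fun i =>
    (Equiv.mulRight (l.take i).prod).summable_iff (f := fun x => |f (x * l[i]) - f x| ^ p)
      |>.mpr (summable_abs_sub_rpow hf hp₀ l[i])
  calc shiftEnergy f p l.prod
      ≤ ∑' x, (l.length : ℝ) ^ (p - 1) *
          ∑ i : Fin l.length, |f (x * (l.take i).prod * l[i]) - f (x * (l.take i).prod)| ^ p :=
        (summable_abs_sub_rpow hf hp₀ _).tsum_le_tsum (abs_sub_list_prod_rpow_le hp · l)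
          ((summable_sum fun i _ => hstep i).mul_left _)
    _ = _ := by
        rw [tsum_mul_left, Summable.tsum_finsetSum fun i _ => hstep i]
        simp only [tsum_abs_sub_rpow_mul_right]

lemma shiftEnergy_list_prod_le_of_forall_mem {S : Finset G} (hf : (Function.support f).Finite)
    (hp : 1 ≤ p) {l : List G} (hl : ∀ s ∈ l, s ∈ S) :
    shiftEnergy f p l.prod ≤ (l.length : ℝ) ^ p * ∑ s ∈ S, shiftEnergy f p s := by
  have hletters : ∑ i : Fin l.length, shiftEnergy f p l[i] ≤
      l.length * ∑ s ∈ S, shiftEnergy f p s := by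
    simpa using sum_le_card_nsmul univ (fun i : Fin l.length => shiftEnergy f p l[i])
      (∑ s ∈ S, shiftEnergy f p s) fun i _ => single_le_sum (fun s _ => shiftEnergy_nonneg s) (hl _ (List.getElem_mem i.isLt))
  calc shiftEnergy f p l.prod
      ≤ (l.length : ℝ) ^ (p - 1) * (l.length * ∑ s ∈ S, shiftEnergy f p s) :=
        (shiftEnergy_list_prod_le hf hp l).trans (by gcongr)
    _ = _ := by
        rw [← mul_assoc, ← Real.rpow_add_one' (Nat.cast_nonneg _) (by linarith), sub_add_cancel]

lemma tsum_tsum_mul_unifS [DecidableEq G] (S : Finset G) (hf : (Function.support f).Finite)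
    (hp : 0 < p) :
    ∑' x, ∑' z, |f (x * z) - f x| ^ p * unifS S z =
      (S.card : ℝ)⁻¹ * ∑ s ∈ S, shiftEnergy f p s := by
  have hinner : ∀ x, ∑' z, |f (x * z) - f x| ^ p * unifS S z =
      ∑ s ∈ S, |f (x * s) - f x| ^ p * (S.card : ℝ)⁻¹ := fun x => by
    rw [tsum_eq_sum (s := S) fun z hz => by simp [unifS, hz]]
    exact sum_congr rfl fun z hz => by simp [unifS, hz]
  rw [tsum_congr hinner,
    Summable.tsum_finsetSum fun s _ => (summable_abs_sub_rpow hf hp s).mul_right _, mul_sum]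
  exact sum_congr rfl fun s _ => by rw [tsum_mul_right, mul_comm, shiftEnergy]

end ShiftEnergy

lemma exists_list_length_eq_wordLength {G : Type*} [Group G] {S : Finset G}
    (hsym : ∀ s ∈ S, s⁻¹ ∈ S) (hgen : Subgroup.closure (S : Set G) = ⊤) (y : G) :
    ∃ l : List G, (∀ s ∈ l, s ∈ S) ∧ l.length = wordLength S y ∧ l.prod = y := by
  have hy : y ∈ Submonoid.closure (S : Set G) := by
    have hinv : (S : Set G)⁻¹ ⊆ S := fun s hs => by simpa using hsym _ hs
    rw [← Set.union_eq_self_of_subset_right hinv, ← Subgroup.closure_toSubmonoid, hgen]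
    trivial
  obtain ⟨l, hlS, hl⟩ := Submonoid.exists_list_of_mem_closure hy
  have hlength : l.length ∈ {n : ℕ | ∃ l : List G, (∀ x ∈ l, x ∈ S) ∧ l.length = n ∧ l.prod = y} :=
    ⟨l, hlS, rfl, hl⟩
  exact Nat.sInf_mem ⟨_, hlength⟩

/-- Pseudo-Poincaré inequality: for every `y ∈ G`, `p ≥ 1` and finitely
supported `f : G → ℝ`,
`Σ_x |f(xy) - f(x)|^p ≤ |S|·|y|^p · Σ_{x,z} |f(xz) - f(x)|^p u(z)`,
where `u` is uniform on the finite symmetric generating set `S` containing `1`. -/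
theorem pseudo_poincare {G : Type*} [Group G] [DecidableEq G]
    (S : Finset G) (hone : (1 : G) ∈ S) (hsym : ∀ s ∈ S, s⁻¹ ∈ S)
    (hgen : Subgroup.closure (S : Set G) = ⊤)
    (y : G) (p : ℝ) (hp : 1 ≤ p)
    (f : G → ℝ) (hfin : (Function.support f).Finite) :
    (∑' x : G, |f (x * y) - f x| ^ p) ≤
      (S.card : ℝ) * ((wordLength S y : ℝ)) ^ p *
        ∑' x : G, ∑' z : G, |f (x * z) - f x| ^ p * unifS S z := by
  obtain ⟨l, hlS, hlen, rfl⟩ := exists_list_length_eq_wordLength hsym hgen y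
  have hcard : (S.card : ℝ) ≠ 0 := by exact_mod_cast (card_pos.mpr ⟨1, hone⟩).ne'
  rw [tsum_tsum_mul_unifS S hfin (by linarith), ← hlen, mul_comm (S.card : ℝ), mul_assoc,
    mul_inv_cancel_left₀ hcard]
  exact shiftEnergy_list_prod_le_of_forall_mem hfin hp hlS
end

section
/- Under the weak moment condition W(ρ,φ) ≤ K, the truncated p-moment satisfies Σ_{|y|≤s} |y|^p φ(y) ≤ p·K·Σ_{0≤k≤s} (1+k)^{p−1}/ρ(k) for every s > 0 and p ≥ 1. -/
open scoped BigOperators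

lemma rpow_succ_sub_le' (j : ℕ) (p : ℝ) (hp : 1 ≤ p) :
    ((j:ℝ)+1) ^ p - (j:ℝ) ^ p ≤ p * ((j:ℝ)+1) ^ (p-1) := by
  set b : ℝ := (j:ℝ) + 1 with hb
  have hb0 : (0:ℝ) < b := by positivity
  have hj0 : (0:ℝ) ≤ (j:ℝ) := by positivity
  have hx : (-1 : ℝ) ≤ -1 / b := by
    rw [neg_div]
    simp only [neg_le_neg_iff]
    exact div_le_one_of_le₀ (by linarith) hb0.le
  have hber := one_add_mul_self_le_rpow_one_add hx hp
  have h1 : (1 : ℝ) + (-1/b) = (j:ℝ) / b := by field_simp; rw [hb]; ring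
  rw [h1] at hber
  have h2 : ((j:ℝ)/b) ^ p = (j:ℝ)^p / b^p := Real.div_rpow hj0 hb0.le p
  rw [h2] at hber
  have hbp : (0:ℝ) < b ^ p := Real.rpow_pos_of_pos hb0 p
  have h3 : b ^ (p - 1) = b ^ p / b := by
    rw [Real.rpow_sub hb0, Real.rpow_one]
  rw [h3]
  have : (1 + p * (-1 / b)) * b ^ p ≤ (j:ℝ) ^ p := by
    calc (1 + p * (-1 / b)) * b ^ p ≤ ((j:ℝ)^p / b^p) * b^p :=
          mul_le_mul_of_nonneg_right hber hbp.le
      _ = (j:ℝ)^p := by field_simp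
  have hexp : (1 + p * (-1 / b)) * b ^ p = b ^ p - p * (b ^ p / b) := by
    field_simp; ring
  rw [hexp] at this
  linarith

/-- Under the weak moment condition `W(ρ,φ) ≤ K`, the truncated `p`-moment satisfies
`Σ_{|y|≤s} |y|^p φ(y) ≤ p·K·Σ_{0≤k≤s} (1+k)^{p−1}/ρ(k)`. -/
theorem truncated_moment_bound {G : Type*} [Group G]
    (S : Finset G) (hone : (1 : G) ∈ S) (hsym : ∀ s ∈ S, s⁻¹ ∈ S)
    (hgen : Subgroup.closure (S : Set G) = ⊤)
    (ρ : ℝ → ℝ) (hρmono : MonotoneOn ρ (Set.Ici 0))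
    (hρcont : ContinuousOn ρ (Set.Ici 0)) (hρ1 : ∀ t ≥ (0:ℝ), 1 ≤ ρ t)
    (φ : G → ℝ) (hφ : IsSymProb φ) (K : ℝ)
    (hweak : ∀ t > (0:ℝ),
      t * ∑' x : G, ({x : G | t < ρ ((wordLength S x : ℝ))}).indicator φ x ≤ K)
    (p : ℝ) (hp : 1 ≤ p) (s : ℝ) (hs : 0 < s) :
    (∑' y : G, ({y : G | ((wordLength S y : ℝ)) ≤ s}).indicator
        (fun y => ((wordLength S y : ℝ)) ^ p * φ y) y) ≤
      p * K * ∑ k ∈ Finset.range (Nat.floor s + 1), ((1 : ℝ) + k) ^ (p - 1) / ρ (k : ℝ) := by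
  obtain ⟨hφ0, hφ1, _⟩ := hφ
  set N := Nat.floor s with hN
  -- φ is summable
  have hφsum : Summable φ := by
    by_contra h
    rw [tsum_eq_zero_of_not_summable h] at hφ1
    norm_num at hφ1
  -- K ≥ 0
  have hK0 : 0 ≤ K := by
    have := hweak 1 one_pos
    have hnn : 0 ≤ ∑' x : G, ({x : G | (1:ℝ) < ρ ((wordLength S x : ℝ))}).indicator φ x :=
      tsum_nonneg fun x => Set.indicator_nonneg (fun y _ => hφ0 y) x
    linarith
  -- coefficients
  set c : ℕ → ℝ := fun j => ((j:ℝ)+1) ^ p - (j:ℝ) ^ p with hc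
  have hc0 : ∀ j, 0 ≤ c j := by
    intro j
    have : (j:ℝ) ^ p ≤ ((j:ℝ)+1) ^ p :=
      Real.rpow_le_rpow (by positivity) (by linarith) (by linarith)
    simpa [hc] using sub_nonneg.mpr this
  -- the majorant family
  set g : ℕ → G → ℝ := fun j y =>
    c j * ({y : G | (j:ℕ) < wordLength S y}).indicator φ y with hg
  have hgsum : ∀ j : ℕ, Summable (g j) :=
    fun j => (hφsum.indicator _).mul_left (c j)
  have hg0 : ∀ j y, 0 ≤ g j y := fun j y =>
    mul_nonneg (hc0 j) (Set.indicator_nonneg (fun z _ => hφ0 z) y)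
  -- pointwise bound
  have hpt : ∀ y : G,
      ({y : G | ((wordLength S y : ℝ)) ≤ s}).indicator
        (fun y => ((wordLength S y : ℝ)) ^ p * φ y) y
      ≤ ∑ j ∈ Finset.range (N+1), g j y := by
    intro y
    by_cases hy : ((wordLength S y : ℝ)) ≤ s
    · have hmem : y ∈ {y : G | ((wordLength S y : ℝ)) ≤ s} := hy
      rw [Set.indicator_of_mem hmem]
      set n := wordLength S y with hn
      have hnN : n ≤ N := Nat.le_floor hy
      have hsplit : ∑ j ∈ Finset.range (N+1), g j y
          = ∑ j ∈ Finset.range n, g j y + ∑ j ∈ Finset.Ico n (N+1), g j y := by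
        rw [Finset.range_eq_Ico, ← Finset.sum_Ico_consecutive _ (Nat.zero_le n) (by omega),
          ← Finset.range_eq_Ico]
      have h1 : ∑ j ∈ Finset.range n, g j y = (n:ℝ) ^ p * φ y := by
        have : ∀ j ∈ Finset.range n, g j y = c j * φ y := by
          intro j hj
          have : j < n := Finset.mem_range.mp hj
          simp only [hg, Set.indicator_of_mem (show y ∈ {y : G | j < wordLength S y} from this)]
        rw [Finset.sum_congr rfl this, ← Finset.sum_mul]
        congr 1
        have htel : ∑ j ∈ Finset.range n, c j = ((n:ℝ)) ^ p - ((0:ℕ):ℝ) ^ p := by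
          have := Finset.sum_range_sub (fun i : ℕ => ((i:ℝ)) ^ p) n
          simp only [hc]
          rw [← this]
          apply Finset.sum_congr rfl
          intro j _
          push_cast
          ring_nf
        rw [htel]
        simp [Real.zero_rpow (by linarith : p ≠ 0)]
      have h2 : 0 ≤ ∑ j ∈ Finset.Ico n (N+1), g j y :=
        Finset.sum_nonneg fun j _ => hg0 j y
      rw [hsplit, h1]
      linarith
    · have hmem : y ∉ {y : G | ((wordLength S y : ℝ)) ≤ s} := hy
      rw [Set.indicator_of_notMem hmem]
      exact Finset.sum_nonneg fun j _ => hg0 j y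
  -- tail bound : tsum of indicator {j < |y|} φ ≤ K / ρ j
  have htail : ∀ j : ℕ,
      (∑' y : G, ({y : G | (j:ℕ) < wordLength S y}).indicator φ y) ≤ K / ρ (j:ℝ) := by
    intro j
    set A := ∑' y : G, ({y : G | (j:ℕ) < wordLength S y}).indicator φ y with hA
    have hA0 : 0 ≤ A := tsum_nonneg fun x => Set.indicator_nonneg (fun z _ => hφ0 z) x
    have hρj : (1:ℝ) ≤ ρ (j:ℝ) := hρ1 _ (by positivity)
    have hρjpos : (0:ℝ) < ρ (j:ℝ) := by linarith
    -- show t * A ≤ K for all 0 < t < ρ j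
    have key : ∀ t : ℝ, 0 < t → t < ρ (j:ℝ) → t * A ≤ K := by
      intro t ht htρ
      have hsub : {y : G | (j:ℕ) < wordLength S y}
          ⊆ {x : G | t < ρ ((wordLength S x : ℝ))} := by
        intro y hy
        have hjy : (j:ℝ) ≤ (wordLength S y : ℝ) := by
          exact_mod_cast Nat.le_of_lt hy
        have : ρ (j:ℝ) ≤ ρ ((wordLength S y : ℝ)) :=
          hρmono (Set.mem_Ici.mpr (by positivity)) (Set.mem_Ici.mpr (by positivity)) hjy
        exact lt_of_lt_of_le htρ this
      have hAle : A ≤ ∑' x : G, ({x : G | t < ρ ((wordLength S x : ℝ))}).indicator φ x := by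
        apply Summable.tsum_le_tsum _ (hφsum.indicator _) (hφsum.indicator _)
        intro y
        exact Set.indicator_le_indicator_of_subset hsub (fun z => hφ0 z) y
      calc t * A ≤ t * ∑' x : G, ({x : G | t < ρ ((wordLength S x : ℝ))}).indicator φ x :=
            mul_le_mul_of_nonneg_left hAle ht.le
        _ ≤ K := hweak t ht
    -- conclude ρ j * A ≤ K
    have hfin : ρ (j:ℝ) * A ≤ K := by
      by_contra hcon
      push_neg at hcon
      have hApos : 0 < A := by
        rcases hA0.lt_or_eq with h | h
        · exact h
        · rw [← h] at hcon; simp at hcon; linarith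
      set t := (K + ρ (j:ℝ) * A) / (2 * A) with htdef
      have ht0 : 0 < t := by positivity
      have htlt : t < ρ (j:ℝ) := by
        rw [htdef, div_lt_iff₀ (by positivity)]
        nlinarith
      have := key t ht0 htlt
      rw [htdef, div_mul_eq_mul_div, mul_comm (2:ℝ) A, ← div_div,
        mul_div_assoc] at this
      have hAA : A / A = 1 := div_self (ne_of_gt hApos)
      rw [hAA, mul_one] at this
      nlinarith
    rw [le_div_iff₀ hρjpos, mul_comm]
    exact hfin
  -- combine
  have hsumg : Summable (fun y => ∑ j ∈ Finset.range (N+1), g j y) :=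
    summable_sum fun j _ => hgsum j
  have hlhs_sum : Summable (fun y : G => ({y : G | ((wordLength S y : ℝ)) ≤ s}).indicator
        (fun y => ((wordLength S y : ℝ)) ^ p * φ y) y) := by
    apply Summable.of_nonneg_of_le _ hpt hsumg
    intro y
    exact Set.indicator_nonneg (fun z _ => mul_nonneg (Real.rpow_nonneg (by positivity) p) (hφ0 z)) y
  calc (∑' y : G, ({y : G | ((wordLength S y : ℝ)) ≤ s}).indicator
        (fun y => ((wordLength S y : ℝ)) ^ p * φ y) y)
      ≤ ∑' y : G, ∑ j ∈ Finset.range (N+1), g j y :=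
        Summable.tsum_le_tsum hpt hlhs_sum hsumg
    _ = ∑ j ∈ Finset.range (N+1), ∑' y : G, g j y := Summable.tsum_finsetSum fun j _ => hgsum j
    _ ≤ ∑ j ∈ Finset.range (N+1), p * K * (((1:ℝ) + j) ^ (p-1) / ρ (j:ℝ)) := by
        apply Finset.sum_le_sum
        intro j _
        have hρj : (1:ℝ) ≤ ρ (j:ℝ) := hρ1 _ (by positivity)
        have hρjpos : (0:ℝ) < ρ (j:ℝ) := by linarith
        have h1 : ∑' y : G, g j y = c j * ∑' y : G,
            ({y : G | (j:ℕ) < wordLength S y}).indicator φ y := tsum_mul_left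
        rw [h1]
        have hcle : c j ≤ p * ((1:ℝ) + (j:ℝ)) ^ (p-1) := by
          have := rpow_succ_sub_le' j p hp
          simpa [hc, add_comm] using this
        calc c j * ∑' y : G, ({y : G | (j:ℕ) < wordLength S y}).indicator φ y
            ≤ c j * (K / ρ (j:ℝ)) := by
              apply mul_le_mul_of_nonneg_left (htail j) (hc0 j)
          _ ≤ (p * ((1:ℝ) + (j:ℝ)) ^ (p-1)) * (K / ρ (j:ℝ)) := by
              apply mul_le_mul_of_nonneg_right hcle
              positivity
          _ = p * K * (((1:ℝ) + j) ^ (p-1) / ρ (j:ℝ)) := by ring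
    _ = p * K * ∑ k ∈ Finset.range (N + 1), ((1 : ℝ) + k) ^ (p - 1) / ρ (k : ℝ) := by
        rw [Finset.mul_sum]
end

section
/- For any symmetric probability measure φ on a countable group G, the continuous-time return probability h_t^φ(e) = e^{−t}Σ_{k≥0}(t^k/k!)φ^{(k)}(e) satisfies φ^{(2n+2)}(e) ≤ 2·h_{2n}^φ(e) and h_{4n}^φ(e) ≤ e^{−2n} + φ^{(2n)}(e) for all n ≥ 1. -/
open scoped BigOperators

/-- Convolution of two measures on a group. -/
noncomputable def convolve {G : Type*} [Group G] (μ ν : G → ℝ) : G → ℝ :=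
  fun x => ∑' y : G, μ y * ν (y⁻¹ * x)

open Classical in
/-- Convolution powers `μ^{(n)}` (with `μ^{(0)} = δ_e`). -/
noncomputable def convPow {G : Type*} [Group G] (μ : G → ℝ) : ℕ → G → ℝ
  | 0 => fun x => if x = 1 then 1 else 0
  | n + 1 => convolve μ (convPow μ n)

/-- The continuous-time return probability
`h_t^φ(e) = e^{−t} Σ_{k≥0} (t^k/k!) φ^{(k)}(e)`. -/
noncomputable def contHeat {G : Type*} [Group G] (φ : G → ℝ) (t : ℝ) : ℝ :=
  Real.exp (-t) * ∑' k : ℕ, t ^ k / (Nat.factorial k : ℝ) * convPow φ k 1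

/-!
On `ℓ²(G)`, convolution by `φ` is a self-adjoint operator `P` of norm at most `1` with
`⟪δₑ, Pᵏ δₑ⟫ = φ⁽ᵏ⁾(e)`. Through the continuous functional calculus, `f ↦ ⟪δₑ, f(P) δₑ⟫` is
therefore a positive linear functional on continuous functions on `[-1, 1]`, i.e. integration
against the spectral measure of `P` at `δₑ`: it sends `xᵏ` to `φ⁽ᵏ⁾(e)` and `e^{t(x-1)}` to
`h_t(e)`. Both inequalities are then integrated pointwise inequalities on `[-1, 1]`:
`x^{2n+2} ≤ e^{2n(x-1)} + e^{-2n(x+1)}` and `e^{4n(x-1)} ≤ e^{-2n} + x^{2n}`; the term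
`e^{-2n(x+1)}` integrates to at most `h_{2n}(e)` because every `φ⁽ᵏ⁾(e)` is nonnegative.
-/

open scoped InnerProductSpace

theorem pow_le_exp_mul_sub_one {y : ℝ} (hy : 0 ≤ y) (m : ℕ) :
    y ^ m ≤ Real.exp (m * (y - 1)) := by
  rw [Real.exp_nat_mul]
  gcongr
  linarith [Real.add_one_le_exp (y - 1)]

theorem pow_two_mul_add_two_le_exp_mul_add_exp {x : ℝ} (hx : x ∈ Set.Icc (-1) 1) (n : ℕ) :
    x ^ (2 * n + 2) ≤
      Real.exp (-(2 * n)) * (Real.exp (2 * n * x) + Real.exp (-(2 * n) * x)) := by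
  have habs : |x| ≤ 1 := abs_le.2 hx
  have hcosh : Real.exp (2 * n * |x|) ≤ Real.exp (2 * n * x) + Real.exp (-(2 * n) * x) := by
    rcases abs_choice x with h | h
    · rw [h]; linarith [Real.exp_pos (-(2 * n) * x)]
    · rw [h, mul_neg, ← neg_mul]; linarith [Real.exp_pos (2 * n * x)]
  calc x ^ (2 * n + 2) ≤ |x| ^ (2 * n) :=
        (le_abs_self _).trans_eq (abs_pow x _) |>.trans
          (pow_le_pow_of_le_one (abs_nonneg x) habs (by omega))
    _ ≤ Real.exp (↑(2 * n) * (|x| - 1)) := pow_le_exp_mul_sub_one (abs_nonneg x) _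
    _ = Real.exp (-(2 * n)) * Real.exp (2 * n * |x|) := by
        rw [← Real.exp_add]; push_cast; ring_nf
    _ ≤ _ := by gcongr

theorem exp_two_mul_sub_one_le {x : ℝ} (h₁ : 1 / 2 ≤ x) (h₂ : x ≤ 1) :
    Real.exp (2 * (x - 1)) ≤ x := by
  have hx : 0 < x := by linarith
  rw [← Real.le_log_iff_exp_le hx]
  refine le_trans ?_ (Real.one_sub_inv_le_log_of_pos hx)
  have hinv : x⁻¹ ≤ 2 := by rw [inv_le_comm₀ hx two_pos]; linarith
  nlinarith [mul_nonneg (sub_nonneg.2 h₂) (sub_nonneg.2 hinv), mul_inv_cancel₀ hx.ne']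

theorem exp_neg_mul_mul_exp_mul_le_exp_add_pow {x : ℝ} (hx : x ≤ 1) (n : ℕ) :
    Real.exp (-(4 * n)) * Real.exp (4 * n * x) ≤ Real.exp (-(2 * n)) + x ^ (2 * n) := by
  rw [← Real.exp_add]
  rcases le_or_gt x (1 / 2) with hx' | hx'
  · have : Real.exp (-(4 * n) + 4 * n * x) ≤ Real.exp (-(2 * n)) := by
      gcongr
      nlinarith [(n.cast_nonneg : (0 : ℝ) ≤ n)]
    linarith [(even_two_mul n).pow_nonneg x]
  · have : Real.exp (-(4 * n) + 4 * n * x) ≤ x ^ (2 * n) := by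
      calc Real.exp (-(4 * n) + 4 * n * x) = Real.exp (2 * (x - 1)) ^ (2 * n) := by
            rw [← Real.exp_nat_mul]; push_cast; ring_nf
        _ ≤ x ^ (2 * n) := by gcongr; exact exp_two_mul_sub_one_le hx'.le hx
    linarith [Real.exp_pos (-(2 * n))]

theorem convPow_nonneg {G : Type*} [Group G] {φ : G → ℝ} (hφ : ∀ x, 0 ≤ φ x) (k : ℕ) (x : G) :
    0 ≤ convPow φ k x := by
  induction k generalizing x with
  | zero => simp only [convPow]; split_ifs <;> norm_num
  | succ k ih => exact tsum_nonneg fun y => mul_nonneg (hφ y) (ih _)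

theorem IsSymProb.summable {G : Type*} [Group G] {φ : G → ℝ} (hφ : IsSymProb φ) : Summable φ := by
  by_contra h
  simpa [tsum_eq_zero_of_not_summable h] using hφ.2.1

theorem IsSymProb.hasSum_abs {G : Type*} [Group G] {φ : G → ℝ} (hφ : IsSymProb φ) :
    HasSum (fun y => |φ y|) 1 := by
  simpa only [abs_of_nonneg (hφ.1 _), hφ.2.1] using hφ.summable.hasSum

section SpectralIntegral

variable {H : Type*} [NormedAddCommGroup H] [InnerProductSpace ℂ H] [CompleteSpace H]

/-- `f ↦ ∫ f dμ`, where `μ` is the spectral measure of `T` at the vector `v`. -/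
noncomputable def spectralIntegral (T : H →L[ℂ] H) (v : H) (f : ℝ → ℝ) : ℝ :=
  (⟪v, cfc f T v⟫_ℂ).re

variable {T : H →L[ℂ] H} (v : H)

theorem spectralIntegral_mono {f g : ℝ → ℝ} (hf : ContinuousOn f (spectrum ℝ T))
    (hg : ContinuousOn g (spectrum ℝ T)) (hfg : ∀ x ∈ spectrum ℝ T, f x ≤ g x) :
    spectralIntegral T v f ≤ spectralIntegral T v g := by
  have := ((ContinuousLinearMap.le_def _ _).1 (cfc_mono hfg hf hg)).re_inner_nonneg_right v
  simpa [spectralIntegral, inner_sub_right] using this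

theorem spectralIntegral_add {f g : ℝ → ℝ} (hf : ContinuousOn f (spectrum ℝ T))
    (hg : ContinuousOn g (spectrum ℝ T)) :
    spectralIntegral T v (fun x => f x + g x) =
      spectralIntegral T v f + spectralIntegral T v g := by
  simp [spectralIntegral, cfc_add (a := T) f g hf hg]

theorem spectralIntegral_const_mul (c : ℝ) {f : ℝ → ℝ} (hf : ContinuousOn f (spectrum ℝ T)) :
    spectralIntegral T v (fun x => c * f x) = c * spectralIntegral T v f := by
  simp [spectralIntegral, cfc_const_mul c f T hf]

theorem spectralIntegral_const_add (hT : IsSelfAdjoint T) (c : ℝ) {f : ℝ → ℝ}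
    (hf : ContinuousOn f (spectrum ℝ T)) :
    spectralIntegral T v (fun x => c + f x) = c * ‖v‖ ^ 2 + spectralIntegral T v f := by
  simp [spectralIntegral, cfc_const_add c f T hf hT, Algebra.algebraMap_eq_smul_one,
    ← Complex.ofReal_pow]

theorem spectralIntegral_pow (hT : IsSelfAdjoint T) (k : ℕ) :
    spectralIntegral T v (· ^ k) = (⟪v, (T ^ k) v⟫_ℂ).re := by
  rw [spectralIntegral, cfc_pow_id T k hT]

theorem hasSum_spectralIntegral_exp_mul (hT : IsSelfAdjoint T) (t : ℝ) :
    HasSum (fun k => t ^ k / (Nat.factorial k : ℝ) * (⟪v, (T ^ k) v⟫_ℂ).re)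
      (spectralIntegral T v fun x => Real.exp (t * x)) := by
  have hexp : cfc (fun x => Real.exp (t * x)) T = NormedSpace.exp (t • T) := by
    simp_rw [← smul_eq_mul, cfc_comp_smul t Real.exp T,
      CFC.real_exp_eq_normedSpace_exp ((IsSelfAdjoint.all t).smul hT)]
  let L : (H →L[ℂ] H) →L[ℝ] ℝ :=
    Complex.reCLM.comp (((innerSL ℂ v).comp (.apply ℂ H v)).restrictScalars ℝ)
  convert (NormedSpace.exp_series_hasSum_exp' (𝕂 := ℝ) (t • T)).mapL L using 1
  · ext k
    simp [L, smul_pow, div_eq_inv_mul, mul_assoc]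
  · simp [L, spectralIntegral, hexp]

end SpectralIntegral

theorem spectrum_subset_Icc_of_norm_le_one {A : Type*} [NormedRing A] [NormedAlgebra ℝ A]
    [CompleteSpace A] [NormOneClass A] {a : A} (ha : ‖a‖ ≤ 1) :
    spectrum ℝ a ⊆ Set.Icc (-1) 1 := fun _ hx =>
  abs_le.1 ((spectrum.norm_le_norm_of_mem hx).trans ha)

section CompEquiv

variable {α : Type*}

theorem memℓp_two_comp_equiv (e : α ≃ α) (f : lp (fun _ : α => ℂ) 2) :
    Memℓp (fun x => f (e x)) 2 :=
  memℓp_gen <| e.summable_iff.2 ((memℓp_gen_iff (by norm_num)).1 (lp.memℓp f))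

noncomputable def lpCompEquiv (e : α ≃ α) : lp (fun _ : α => ℂ) 2 →L[ℂ] lp (fun _ : α => ℂ) 2 :=
  LinearMap.mkContinuous
    { toFun := fun f => ⟨fun x => f (e x), memℓp_two_comp_equiv e f⟩
      map_add' := fun _ _ => rfl
      map_smul' := fun _ _ => rfl }
    1 fun f => by
      rw [one_mul, lp.norm_eq_tsum_rpow (by norm_num), lp.norm_eq_tsum_rpow (by norm_num)]
      exact (congrArg (· ^ _) (e.tsum_eq fun x => ‖f x‖ ^ _)).le

@[simp]
theorem lpCompEquiv_apply (e : α ≃ α) (f : lp (fun _ : α => ℂ) 2) (x : α) :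
    lpCompEquiv e f x = f (e x) :=
  rfl

theorem norm_lpCompEquiv_le (e : α ≃ α) : ‖lpCompEquiv e‖ ≤ 1 :=
  LinearMap.mkContinuous_norm_le _ zero_le_one _

theorem adjoint_lpCompEquiv (e : α ≃ α) :
    (lpCompEquiv e).adjoint = lpCompEquiv e.symm := by
  refine ((ContinuousLinearMap.eq_adjoint_iff _ _).2 fun f g => ?_).symm
  simp only [lp.inner_eq_tsum, lpCompEquiv_apply]
  exact (e.tsum_eq fun x => ⟪f (e.symm x), g x⟫_ℂ).symm.trans (by simp)

instance lp.nontrivial_of_nonempty [Nonempty α] : Nontrivial (lp (fun _ : α => ℂ) 2) := by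
  classical
  obtain ⟨a⟩ := ‹Nonempty α›
  exact ⟨lp.single 2 a 1, 0, fun h => by simpa using congrArg (‖·‖) h⟩

end CompEquiv

section ConvolutionOperator

variable {G : Type*} [Group G] {φ : G → ℝ}

/-- Left convolution `f ↦ φ ⋆ f` on `ℓ²(G)`. -/
noncomputable def convOp (φ : G → ℝ) : lp (fun _ : G => ℂ) 2 →L[ℂ] lp (fun _ : G => ℂ) 2 :=
  ∑' y, (φ y : ℂ) • lpCompEquiv (Equiv.mulLeft y⁻¹)

theorem norm_smul_lpCompEquiv_le (y : G) :
    ‖(φ y : ℂ) • lpCompEquiv (Equiv.mulLeft y⁻¹)‖ ≤ |φ y| := by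
  simpa using norm_smul_le (φ y : ℂ) (lpCompEquiv (Equiv.mulLeft y⁻¹)) |>.trans
    (mul_le_of_le_one_right (norm_nonneg _) (norm_lpCompEquiv_le _))

theorem norm_convOp_le {s : ℝ} (hφ : HasSum (fun y => |φ y|) s) : ‖convOp φ‖ ≤ s :=
  tsum_of_norm_bounded hφ norm_smul_lpCompEquiv_le

theorem convOp_apply (hφ : Summable φ) (f : lp (fun _ : G => ℂ) 2) (x : G) :
    convOp φ f x = ∑' y, φ y * f (y⁻¹ * x) := by
  have hsum : Summable fun y => (φ y : ℂ) • lpCompEquiv (Equiv.mulLeft y⁻¹) :=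
    .of_norm_bounded hφ.abs norm_smul_lpCompEquiv_le
  have := hsum.hasSum.mapL ((lp.evalCLM ℂ (fun _ : G => ℂ) 2 x).comp (.apply ℂ _ f))
  exact this.tsum_eq.symm

theorem isSelfAdjoint_convOp (hφ : ∀ x, φ x⁻¹ = φ x) : IsSelfAdjoint (convOp φ) := by
  have hstar (y : G) : star ((φ y : ℂ) • lpCompEquiv (Equiv.mulLeft y⁻¹)) =
      (φ y⁻¹ : ℂ) • lpCompEquiv (Equiv.mulLeft y⁻¹⁻¹) := by
    rw [star_smul, ContinuousLinearMap.star_eq_adjoint, adjoint_lpCompEquiv, hφ, inv_inv]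
    simp
  rw [IsSelfAdjoint, convOp, tsum_star, tsum_congr hstar]
  exact (Equiv.inv G).tsum_eq fun y => (φ y : ℂ) • lpCompEquiv (Equiv.mulLeft y⁻¹)

theorem spectrum_convOp_subset_Icc {s : ℝ} (hφ : HasSum (fun y => |φ y|) s) (hs : s ≤ 1) :
    spectrum ℝ (convOp φ) ⊆ Set.Icc (-1) 1 :=
  spectrum_subset_Icc_of_norm_le_one ((norm_convOp_le hφ).trans hs)

end ConvolutionOperator

local notation "δₑ" => lp.single 2 1 (1 : ℂ)

local notation:max "Λ[" φ "]" => spectralIntegral (convOp φ) δₑ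

section ReturnProbability

variable {G : Type*} [Group G] [DecidableEq G] {φ : G → ℝ}

theorem convOp_pow_single_apply (hφ : Summable φ) (k : ℕ) (x : G) :
    (convOp φ ^ k) δₑ x = convPow φ k x := by
  induction k generalizing x with
  | zero => by_cases hx : x = 1 <;> simp [convPow, hx]
  | succ k ih =>
    rw [pow_succ', mul_apply_eq_comp, convOp_apply hφ]
    simp only [ih, convPow, convolve, Complex.ofReal_tsum, Complex.ofReal_mul]

theorem inner_single_convOp_pow_single (hφ : Summable φ) (k : ℕ) :
    ⟪δₑ, (convOp φ ^ k) δₑ⟫_ℂ = convPow φ k 1 := by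
  rw [lp.inner_single_left, convOp_pow_single_apply hφ]
  simp

theorem spectralIntegral_convOp_mono {s : ℝ} (hφ : HasSum (fun y => |φ y|) s) (hs : s ≤ 1)
    {f g : ℝ → ℝ} (hf : ContinuousOn f (Set.Icc (-1) 1)) (hg : ContinuousOn g (Set.Icc (-1) 1))
    (hfg : ∀ x ∈ Set.Icc (-1 : ℝ) 1, f x ≤ g x) :
    Λ[φ] f ≤ Λ[φ] g :=
  have hspec := spectrum_convOp_subset_Icc hφ hs
  spectralIntegral_mono _ (hf.mono hspec) (hg.mono hspec) fun x hx => hfg x (hspec hx)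

theorem spectralIntegral_convOp_pow (hφ : Summable φ) (hsymm : ∀ x, φ x⁻¹ = φ x) (k : ℕ) :
    Λ[φ] (· ^ k) = convPow φ k 1 := by
  rw [spectralIntegral_pow _ (isSelfAdjoint_convOp hsymm), inner_single_convOp_pow_single hφ,
    Complex.ofReal_re]

theorem hasSum_spectralIntegral_convOp_exp_mul (hφ : Summable φ) (hsymm : ∀ x, φ x⁻¹ = φ x)
    (t : ℝ) :
    HasSum (fun k => t ^ k / (Nat.factorial k : ℝ) * convPow φ k 1)
      (Λ[φ] fun x => Real.exp (t * x)) := by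
  simpa only [inner_single_convOp_pow_single hφ, Complex.ofReal_re] using
    hasSum_spectralIntegral_exp_mul δₑ (isSelfAdjoint_convOp hsymm) t

theorem contHeat_eq_spectralIntegral (hφ : Summable φ) (hsymm : ∀ x, φ x⁻¹ = φ x) (t : ℝ) :
    contHeat φ t = Real.exp (-t) * Λ[φ] fun x => Real.exp (t * x) := by
  rw [contHeat, (hasSum_spectralIntegral_convOp_exp_mul hφ hsymm t).tsum_eq]

theorem spectralIntegral_convOp_exp_neg_mul_le (hφ₀ : ∀ x, 0 ≤ φ x) (hφ : Summable φ)
    (hsymm : ∀ x, φ x⁻¹ = φ x) {t : ℝ} (ht : 0 ≤ t) :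
    (Λ[φ] fun x => Real.exp (-t * x)) ≤
      Λ[φ] fun x => Real.exp (t * x) := by
  refine hasSum_le (fun k => ?_) (hasSum_spectralIntegral_convOp_exp_mul hφ hsymm (-t))
    (hasSum_spectralIntegral_convOp_exp_mul hφ hsymm t)
  have hpow : (-t) ^ k ≤ t ^ k :=
    (le_abs_self _).trans_eq (by rw [abs_pow, abs_neg, abs_of_nonneg ht])
  have := convPow_nonneg hφ₀ k 1
  gcongr

theorem spectralIntegral_convOp_const_add (hsymm : ∀ x, φ x⁻¹ = φ x) (c : ℝ) {f : ℝ → ℝ}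
    (hf : Continuous f) :
    Λ[φ] (fun x => c + f x) = c + Λ[φ] f := by
  rw [spectralIntegral_const_add _ (isSelfAdjoint_convOp hsymm) c hf.continuousOn,
    lp.norm_single (by norm_num), norm_one, one_pow, mul_one]

end ReturnProbability

theorem discrete_vs_continuous_time_general {G : Type*} [Group G]
    (φ : G → ℝ) (hφ : IsSymProb φ) (n : ℕ) :
    convPow φ (2 * n + 2) 1 ≤ 2 * contHeat φ (2 * n) ∧
      contHeat φ (4 * n) ≤ Real.exp (-(2 * (n : ℝ))) + convPow φ (2 * n) 1 := by
  classical
  have hsum := hφ.summable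
  have habs := hφ.hasSum_abs
  obtain ⟨hφ₀, -, hsymm⟩ := hφ
  constructor
  · calc convPow φ (2 * n + 2) 1 = Λ[φ] (· ^ (2 * n + 2)) :=
          (spectralIntegral_convOp_pow hsum hsymm _).symm
      _ ≤ Λ[φ] fun x => Real.exp (-(2 * n)) * (Real.exp (2 * n * x) + Real.exp (-(2 * n) * x)) :=
          spectralIntegral_convOp_mono habs le_rfl (by fun_prop) (by fun_prop)
            fun x hx => pow_two_mul_add_two_le_exp_mul_add_exp hx n
      _ = Real.exp (-(2 * n)) * (Λ[φ] (fun x => Real.exp (2 * n * x)) +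
            Λ[φ] fun x => Real.exp (-(2 * n) * x)) := by
          rw [spectralIntegral_const_mul _ _ (by fun_prop),
            spectralIntegral_add _ (by fun_prop) (by fun_prop)]
      _ ≤ Real.exp (-(2 * n)) * (Λ[φ] (fun x => Real.exp (2 * n * x)) +
            Λ[φ] fun x => Real.exp (2 * n * x)) := by
          gcongr
          exact spectralIntegral_convOp_exp_neg_mul_le hφ₀ hsum hsymm (by positivity)
      _ = 2 * contHeat φ (2 * n) := by
          rw [contHeat_eq_spectralIntegral hsum hsymm]; ring
  · calc contHeat φ (4 * n) = Λ[φ] fun x => Real.exp (-(4 * n)) * Real.exp (4 * n * x) := by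
          rw [contHeat_eq_spectralIntegral hsum hsymm, spectralIntegral_const_mul _ _ (by fun_prop)]
      _ ≤ Λ[φ] fun x => Real.exp (-(2 * n)) + x ^ (2 * n) :=
          spectralIntegral_convOp_mono habs le_rfl (by fun_prop) (by fun_prop)
            fun x hx => exp_neg_mul_mul_exp_mul_le_exp_add_pow hx.2 n
      _ = Real.exp (-(2 * n)) + convPow φ (2 * n) 1 := by
          rw [spectralIntegral_convOp_const_add hsymm _ (by fun_prop),
            spectralIntegral_convOp_pow hsum hsymm]

/-- For any symmetric probability measure `φ` on a countable group,
`φ^{(2n+2)}(e) ≤ 2·h_{2n}^φ(e)` and `h_{4n}^φ(e) ≤ e^{−2n} + φ^{(2n)}(e)` for `n ≥ 1`. -/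
theorem discrete_vs_continuous_time {G : Type*} [Group G] [Countable G]
    (φ : G → ℝ) (hφ : IsSymProb φ) (n : ℕ) (hn : 1 ≤ n) :
    convPow φ (2 * n + 2) 1 ≤ 2 * contHeat φ (2 * n) ∧
      contHeat φ (4 * n) ≤ Real.exp (-(2 * (n : ℝ))) + convPow φ (2 * n) 1 :=
  discrete_vs_continuous_time_general φ hφ n
end
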